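/- There exists a countable family 𝓕 of chords of S¹ whose endpoints are pairwise distinct (no two chords of 𝓕 share an endpoint on S¹) such that the intersection graph of 𝓕 is isomorphic to the rational circle graph 𝒞_ℚ. -/

import Mathlib

noncomputable section

/-- The unit circle in the complex plane. -/
def S1 : Set ℂ := {z : ℂ | ‖z‖ = 1}

/-- The closed segment in the plane spanned by an unordered pair of points. -/
def chordSegment : Sym2 ℂ → Set ℂ :=
  Sym2.lift ⟨fun a b => segment ℝ a b, fun a b => segment_symm ℝ a b⟩

/-- A chord of the circle: an unordered pair of two distinct points of `S1`. -/
def Chord : Type := {p : Sym2 ℂ // (∀ z ∈ p, z ∈ S1) ∧ ¬ p.IsDiag}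

/-- The circle graph: vertices are the chords of the circle, two distinct chords being
adjacent whenever their segments intersect. -/
def CircleGraph : SimpleGraph Chord where
  Adj C D := C ≠ D ∧ (chordSegment C.1 ∩ chordSegment D.1).Nonempty
  symm := ⟨fun C D ⟨h1, h2⟩ => ⟨h1.symm, by rwa [Set.inter_comm]⟩⟩
  loopless := ⟨fun C h => h.1 rfl⟩

/-- The rational points of the circle: the points `exp (2 π i q)` for `q : ℚ`. -/
def Q1 : Set ℂ := {z : ℂ | ∃ q : ℚ, z = Complex.exp (2 * Real.pi * Complex.I * q)}

/-- A rational chord: an unordered pair of two distinct rational points of the circle. -/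
def ChordQ : Type := {p : Sym2 ℂ // (∀ z ∈ p, z ∈ Q1) ∧ ¬ p.IsDiag}

/-- The rational circle graph: vertices are the rational chords, two distinct chords
being adjacent whenever their segments intersect. -/
def RationalCircleGraph : SimpleGraph ChordQ where
  Adj C D := C ≠ D ∧ (chordSegment C.1 ∩ chordSegment D.1).Nonempty
  symm := ⟨fun C D ⟨h1, h2⟩ => ⟨h1.symm, by rwa [Set.inter_comm]⟩⟩
  loopless := ⟨fun C h => h.1 rfl⟩

/-! Write rational points as angles in `[0, 1)`, so that a rational chord is a pair
`0 ≤ a < b < 1`. Chords with endpoint angles `p < q` and `r < s` in `[0, 1)` meet iff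
`p ≤ r ≤ q ≤ s` or `r ≤ p ≤ s ≤ q`: the line through the chord `pq` separates the arc `(p, q)`
from the arc `(q, p + 1)`, and its part inside the closed disc is the chord itself.

Now move the endpoint `a` of the chord `{a, b}` to the angle `θ (a, t)`, where `t ∈ (0, 1)` is
the counter-clockwise distance from `a` to `b` and `θ` is an order embedding of `ℚ ×ₗ ℚ` into
`[0, 1)`. The new endpoints are pairwise distinct and keep the order of the old ones, and chords
that shared an endpoint become interleaved there; so two new chords meet iff the old ones did. -/

open Real Set
open scoped InnerProductSpace ComplexConjugate

def circlePoint (t : ℝ) : ℂ := Complex.exp (2 * π * Complex.I * t)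

lemma circlePoint_eq_mk (t : ℝ) : circlePoint t = ⟨cos (2 * π * t), sin (2 * π * t)⟩ := by
  rw [circlePoint, show 2 * π * Complex.I * t = ((2 * π * t : ℝ) : ℂ) * Complex.I by
    push_cast; ring]
  exact Complex.ext (Complex.exp_ofReal_mul_I_re _) (Complex.exp_ofReal_mul_I_im _)

lemma norm_circlePoint (t : ℝ) : ‖circlePoint t‖ = 1 := by
  rw [circlePoint, Complex.norm_exp]
  simp

lemma circlePoint_add (s t : ℝ) : circlePoint (s + t) = circlePoint s * circlePoint t := by
  rw [circlePoint, circlePoint, circlePoint, ← Complex.exp_add]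
  push_cast
  ring_nf

lemma circlePoint_injOn : InjOn circlePoint (Ico 0 1) := by
  intro s hs t ht h
  obtain ⟨n, hn⟩ := Complex.exp_eq_exp_iff_exists_int.1 h
  have hst : s = t + n := by
    have := mul_left_cancel₀ (by simp [pi_ne_zero] : (2 * π * Complex.I : ℂ) ≠ 0)
      (hn.trans (by ring) : 2 * π * Complex.I * s = 2 * π * Complex.I * (t + n))
    exact_mod_cast this
  have : n = 0 := by
    have h1 : ((-1 : ℤ) : ℝ) < n := by push_cast; linarith [hs.1, ht.2]
    have h2 : (n : ℝ) < ((1 : ℤ) : ℝ) := by push_cast; linarith [hs.2, ht.1]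
    have := Int.cast_lt.1 h1
    have := Int.cast_lt.1 h2
    omega
  simpa [this] using hst

lemma circlePoint_intCast (n : ℤ) : circlePoint n = 1 := by
  rw [circlePoint, show 2 * π * Complex.I * ((n : ℝ) : ℂ) = n * (2 * π * Complex.I) by
    push_cast; ring]
  exact Complex.exp_int_mul_two_pi_mul_I n

lemma conj_circlePoint (t : ℝ) : conj (circlePoint t) = circlePoint (-t) := by
  rw [circlePoint_eq_mk, circlePoint_eq_mk]
  apply Complex.ext <;> simp

lemma inner_circlePoint (s t : ℝ) :
    ⟪circlePoint s, circlePoint t⟫_ℝ = cos (2 * π * (t - s)) := by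
  rw [Complex.inner, circlePoint_eq_mk, circlePoint_eq_mk, mul_sub, cos_sub]
  simp

lemma cos_lt_cos_of_abs_lt {x y : ℝ} (hxy : |x| < y) (hy : y ≤ π) : cos y < cos x := by
  rw [← cos_abs x]
  exact cos_lt_cos_of_nonneg_of_le_pi (abs_nonneg x) hy hxy

section Chord

variable {p q : ℝ}

lemma inner_circlePoint_midpoint_left :
    ⟪circlePoint ((p + q) / 2), circlePoint p⟫_ℝ = cos (π * (q - p)) := by
  rw [inner_circlePoint, ← cos_neg]; ring_nf

lemma inner_circlePoint_midpoint_right :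
    ⟪circlePoint ((p + q) / 2), circlePoint q⟫_ℝ = cos (π * (q - p)) := by
  rw [inner_circlePoint]; ring_nf

lemma cos_lt_inner_circlePoint {t : ℝ} (hpt : p < t) (htq : t < q) (hqp : q < p + 1) :
    cos (π * (q - p)) < ⟪circlePoint ((p + q) / 2), circlePoint t⟫_ℝ := by
  rw [inner_circlePoint]
  apply cos_lt_cos_of_abs_lt _ (by nlinarith [pi_pos])
  rw [abs_lt]
  constructor <;> nlinarith [pi_pos]

lemma inner_circlePoint_lt_cos {t : ℝ} (hpq : p < q) (hqt : q < t) (htp : t < p + 1) :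
    ⟪circlePoint ((p + q) / 2), circlePoint t⟫_ℝ < cos (π * (q - p)) := by
  have h := cos_lt_cos_of_abs_lt (x := 2 * π * (t - (p + q) / 2) - π) (y := π - π * (q - p))
    (by rw [abs_lt]; constructor <;> nlinarith [pi_pos]) (by nlinarith [pi_pos])
  rw [cos_sub_pi, cos_pi_sub] at h
  rw [inner_circlePoint]
  linarith

lemma segment_circlePoint_subset_closedBall (s t : ℝ) :
    segment ℝ (circlePoint s) (circlePoint t) ⊆ Metric.closedBall 0 1 :=
  (convex_closedBall 0 1).segment_subset (by simp [norm_circlePoint]) (by simp [norm_circlePoint])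

lemma mem_segment_circlePoint_iff (hpq : p < q) (hqp : q < p + 1) {z : ℂ} :
    z ∈ segment ℝ (circlePoint p) (circlePoint q) ↔
      ‖z‖ ≤ 1 ∧ ⟪circlePoint ((p + q) / 2), z⟫_ℝ = cos (π * (q - p)) := by
  set u := circlePoint ((p + q) / 2)
  constructor
  · intro hz
    refine ⟨?_, ?_⟩
    · simpa using segment_circlePoint_subset_closedBall p q hz
    · exact (convex_hyperplane (innerₛₗ ℝ u).isLinear _).segment_subset
        inner_circlePoint_midpoint_left inner_circlePoint_midpoint_right hz
  · rintro ⟨hz, hzu⟩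
    set δ := π * (q - p)
    have hsin : 0 < sin δ := sin_pos_of_pos_of_lt_pi (by nlinarith [pi_pos]) (by nlinarith [pi_pos])
    -- rotating by `conj u` maps the chord onto the segment `[cos δ - i sin δ, cos δ + i sin δ]`
    set w := conj u * z
    have hu : conj u * u = 1 := by
      rw [Complex.conj_mul', norm_circlePoint]; norm_num
    have hzw : z = u * w := by rw [← mul_assoc, mul_comm u, hu, one_mul]
    have hwre : w.re = cos δ := by rw [← hzu, Complex.inner, mul_comm]
    obtain ⟨hw₁, hw₂⟩ : -sin δ ≤ w.im ∧ w.im ≤ sin δ := by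
      have hw : ‖w‖ ≤ 1 := by simpa [w, norm_circlePoint, u] using hz
      refine abs_le_of_sq_le_sq' ?_ hsin.le
      have := Complex.sq_norm w
      rw [Complex.normSq_apply, hwre] at this
      nlinarith [sin_sq_add_cos_sq δ, norm_nonneg w]
    have hP : circlePoint p = u * conj (circlePoint ((q - p) / 2)) := by
      rw [conj_circlePoint, ← circlePoint_add]; ring_nf
    have hQ : circlePoint q = u * circlePoint ((q - p) / 2) := by
      rw [← circlePoint_add]; ring_nf
    have he : circlePoint ((q - p) / 2) = ⟨cos δ, sin δ⟩ := by
      rw [circlePoint_eq_mk, show 2 * π * ((q - p) / 2) = δ by ring]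
    have hw : w = ⟨cos δ, w.im⟩ := Complex.ext hwre rfl
    refine ⟨(1 - w.im / sin δ) / 2, (1 + w.im / sin δ) / 2, ?_, ?_, by ring, ?_⟩
    · have : w.im / sin δ ≤ 1 := (div_le_one hsin).2 hw₂
      linarith
    · have : -1 ≤ w.im / sin δ := (le_div_iff₀ hsin).2 (by linarith)
      linarith
    · rw [hP, hQ, hzw, he, hw]
      apply Complex.ext <;>
        simp only [Complex.add_re, Complex.add_im, Complex.smul_re, Complex.smul_im,
          Complex.mul_re, Complex.mul_im, Complex.conj_re, Complex.conj_im, smul_eq_mul] <;>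
        field_simp <;> ring

lemma segment_circlePoint_inter_nonempty_iff_of_lt {r s : ℝ} (hpq : p < q) (hqp : q < p + 1)
    (hpr : p < r) (hrs : r < s) (hsp : s < p + 1) (hrq : r ≠ q) (hsq : s ≠ q) :
    (segment ℝ (circlePoint p) (circlePoint q) ∩
      segment ℝ (circlePoint r) (circlePoint s)).Nonempty ↔ r < q ∧ q < s := by
  set u := circlePoint ((p + q) / 2)
  have hlin := (innerₛₗ ℝ u).isLinear
  rcases lt_or_gt_of_ne hrq with hrq | hqr
  · rcases lt_or_gt_of_ne hsq with hsq | hqs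
    · refine iff_of_false ?_ (by intro h; linarith [h.2])
      rintro ⟨z, hzPQ, hzRS⟩
      have h₁ := ((mem_segment_circlePoint_iff hpq hqp).1 hzPQ).2
      have h₂ : cos (π * (q - p)) < ⟪u, z⟫_ℝ := (convex_halfSpace_gt hlin _).segment_subset
        (cos_lt_inner_circlePoint hpr hrq hqp)
        (cos_lt_inner_circlePoint (hpr.trans hrs) hsq hqp) hzRS
      linarith
    · refine iff_of_true ?_ ⟨hrq, hqs⟩
      obtain ⟨z, hzRS, hz⟩ :=
        (convex_segment (circlePoint r) (circlePoint s)).isPreconnected.intermediate_value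
        (right_mem_segment ℝ _ _) (left_mem_segment ℝ _ _)
        (continuous_const.inner continuous_id).continuousOn
        ⟨(inner_circlePoint_lt_cos hpq hqs hsp).le, (cos_lt_inner_circlePoint hpr hrq hqp).le⟩
      have hz1 : ‖z‖ ≤ 1 := by simpa using segment_circlePoint_subset_closedBall r s hzRS
      exact ⟨z, (mem_segment_circlePoint_iff hpq hqp).2 ⟨hz1, hz⟩, hzRS⟩
  · refine iff_of_false ?_ (by intro h; linarith [h.1])
    rintro ⟨z, hzPQ, hzRS⟩
    have h₁ := ((mem_segment_circlePoint_iff hpq hqp).1 hzPQ).2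
    have h₂ : ⟪u, z⟫_ℝ < cos (π * (q - p)) := (convex_halfSpace_lt hlin _).segment_subset
      (inner_circlePoint_lt_cos hpq hqr (hrs.trans hsp))
      (inner_circlePoint_lt_cos hpq (hqr.trans hrs) hsp) hzRS
    linarith

end Chord

def WeaklyInterleaved {α : Type*} [LE α] (p q r s : α) : Prop :=
  (p ≤ r ∧ r ≤ q ∧ q ≤ s) ∨ (r ≤ p ∧ p ≤ s ∧ s ≤ q)

lemma WeaklyInterleaved.comm {α : Type*} [LE α] {p q r s : α} :
    WeaklyInterleaved p q r s ↔ WeaklyInterleaved r s p q :=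
  or_comm

lemma StrictMono.weaklyInterleaved_iff {α β : Type*} [LinearOrder α] [Preorder β] {f : α → β}
    (hf : StrictMono f) {p q r s : α} :
    WeaklyInterleaved (f p) (f q) (f r) (f s) ↔ WeaklyInterleaved p q r s := by
  simp only [WeaklyInterleaved, hf.le_iff_le]

lemma segment_circlePoint_inter_nonempty_iff {p q r s : ℝ} (hp : p ∈ Ico 0 1) (hq : q ∈ Ico 0 1)
    (hr : r ∈ Ico 0 1) (hs : s ∈ Ico 0 1) (hpq : p < q) (hrs : r < s) :
    (segment ℝ (circlePoint p) (circlePoint q) ∩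
      segment ℝ (circlePoint r) (circlePoint s)).Nonempty ↔ WeaklyInterleaved p q r s := by
  by_cases hshared : p = r ∨ p = s ∨ q = r ∨ q = s
  · refine iff_of_true ?_ ?_
    · rcases hshared with rfl | rfl | rfl | rfl
      exacts [⟨_, left_mem_segment ℝ _ _, left_mem_segment ℝ _ _⟩,
        ⟨_, left_mem_segment ℝ _ _, right_mem_segment ℝ _ _⟩,
        ⟨_, right_mem_segment ℝ _ _, left_mem_segment ℝ _ _⟩,
        ⟨_, right_mem_segment ℝ _ _, right_mem_segment ℝ _ _⟩]
    · unfold WeaklyInterleaved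
      grind
  push Not at hshared
  obtain ⟨hpr, hps, hqr, hqs⟩ := hshared
  wlog hlt : p < r generalizing p q r s
  · rw [inter_comm, WeaklyInterleaved.comm]
    exact this hr hs hp hq hrs hpq hpr.symm hqr.symm hps.symm hqs.symm (by grind)
  rw [segment_circlePoint_inter_nonempty_iff_of_lt hpq (by linarith [hp.1, hq.2]) hlt hrs
    (by linarith [hp.1, hs.2]) hqr.symm hqs.symm]
  unfold WeaklyInterleaved
  grind

lemma exists_strictMono_mem_Ico (α : Type*) [LinearOrder α] [Countable α] :
    ∃ θ : α → ℝ, StrictMono θ ∧ ∀ e, θ e ∈ Ico 0 1 := by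
  have : Nontrivial (Ioo (0 : ℝ) 1) :=
    ⟨⟨⟨1 / 4, by norm_num, by norm_num⟩, ⟨1 / 2, by norm_num, by norm_num⟩, by simp⟩⟩
  obtain ⟨f⟩ := Order.embedding_from_countable_to_dense (α := α) (β := Ioo (0 : ℝ) 1)
  exact ⟨fun e => f e, fun e e' h => f.strictMono h, fun e => Ioo_subset_Ico_self (f e).2⟩

lemma circlePoint_ratCast_mem_Q1 (a : ℚ) : circlePoint a ∈ Q1 :=
  ⟨a, by rw [circlePoint, Complex.ofReal_ratCast]⟩

lemma exists_eq_circlePoint_of_mem_Q1 {z : ℂ} (hz : z ∈ Q1) :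
    ∃ a : ℚ, 0 ≤ a ∧ a < 1 ∧ z = circlePoint a := by
  obtain ⟨q, rfl⟩ := hz
  refine ⟨Int.fract q, Int.fract_nonneg q, Int.fract_lt_one q, ?_⟩
  rw [Int.fract, Rat.cast_sub, Rat.cast_intCast, sub_eq_add_neg, ← Int.cast_neg, circlePoint_add,
    circlePoint_intCast, mul_one, circlePoint, Complex.ofReal_ratCast]

lemma circlePoint_ratCast_injOn : InjOn (fun a : ℚ => circlePoint a) (Ico 0 1) :=
  fun a ha b hb h => Rat.cast_injective (α := ℝ) <|
    circlePoint_injOn ⟨by exact_mod_cast ha.1, by exact_mod_cast ha.2⟩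
      ⟨by exact_mod_cast hb.1, by exact_mod_cast hb.2⟩ h

def AnglePair : Type := {x : ℚ × ℚ // 0 ≤ x.1 ∧ x.1 < x.2 ∧ x.2 < 1}

instance : Countable AnglePair := Subtype.countable

namespace AnglePair

lemma fst_mem (x : AnglePair) : x.1.1 ∈ Ico (0 : ℚ) 1 := ⟨x.2.1, x.2.2.1.trans x.2.2.2⟩

lemma snd_mem (x : AnglePair) : x.1.2 ∈ Ico (0 : ℚ) 1 := ⟨x.2.1.trans x.2.2.1.le, x.2.2.2⟩

def toChordQ (x : AnglePair) : ChordQ :=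
  ⟨s(circlePoint x.1.1, circlePoint x.1.2), by simp [circlePoint_ratCast_mem_Q1],
    fun h => x.2.2.1.ne (circlePoint_ratCast_injOn x.fst_mem x.snd_mem (Sym2.mk_isDiag_iff.1 h))⟩

lemma toChordQ_bijective : Function.Bijective toChordQ := by
  constructor
  · intro x y h
    have hinj := circlePoint_ratCast_injOn
    rcases Sym2.eq_iff.1 (congrArg Subtype.val h) with ⟨h₁, h₂⟩ | ⟨h₁, h₂⟩
    · exact Subtype.ext (Prod.ext (hinj x.fst_mem y.fst_mem h₁) (hinj x.snd_mem y.snd_mem h₂))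
    · have := hinj x.fst_mem y.snd_mem h₁
      have := hinj x.snd_mem y.fst_mem h₂
      exfalso
      linarith [x.2.2.1, y.2.2.1]
  · rintro ⟨p, hQ, hp⟩
    induction p using Sym2.ind with | _ z w => ?_
    obtain ⟨a, ha₀, ha₁, rfl⟩ := exists_eq_circlePoint_of_mem_Q1 (hQ z (Sym2.mem_mk_left z w))
    obtain ⟨b, hb₀, hb₁, rfl⟩ := exists_eq_circlePoint_of_mem_Q1 (hQ _ (Sym2.mem_mk_right _ w))
    have hab : a ≠ b := fun h => hp (Sym2.mk_isDiag_iff.2 (by rw [h]))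
    rcases hab.lt_or_gt with hab | hba
    · exact ⟨⟨(a, b), ha₀, hab, hb₁⟩, rfl⟩
    · exact ⟨⟨(b, a), hb₀, hba, ha₁⟩, Subtype.ext Sym2.eq_swap⟩

def chordQEquiv : AnglePair ≃ ChordQ := Equiv.ofBijective toChordQ toChordQ_bijective

lemma rationalCircleGraph_adj_toChordQ {x y : AnglePair} :
    RationalCircleGraph.Adj x.toChordQ y.toChordQ ↔
      x ≠ y ∧ WeaklyInterleaved x.1.1 x.1.2 y.1.1 y.1.2 := by
  change _ ≠ _ ∧ _ ↔ _
  rw [toChordQ_bijective.1.ne_iff]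
  refine and_congr_right fun _ => ?_
  rw [← (Rat.cast_strictMono (K := ℝ)).weaklyInterleaved_iff]
  have hcast {a : ℚ} (ha : a ∈ Ico (0 : ℚ) 1) : (a : ℝ) ∈ Ico (0 : ℝ) 1 :=
    ⟨by exact_mod_cast ha.1, by exact_mod_cast ha.2⟩
  exact segment_circlePoint_inter_nonempty_iff (hcast x.fst_mem) (hcast x.snd_mem)
    (hcast y.fst_mem) (hcast y.snd_mem) (by exact_mod_cast x.2.2.1) (by exact_mod_cast y.2.2.1)

def start (x : AnglePair) : ℚ ×ₗ ℚ := toLex (x.1.1, x.1.2 - x.1.1)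

def finish (x : AnglePair) : ℚ ×ₗ ℚ := toLex (x.1.2, x.1.1 - x.1.2 + 1)

lemma start_lt_finish (x : AnglePair) : x.start < x.finish :=
  Prod.Lex.toLex_lt_toLex.2 (Or.inl x.2.2.1)

lemma eq_of_mem_ends {x y : AnglePair} {e : ℚ ×ₗ ℚ} (hx : e = x.start ∨ e = x.finish)
    (hy : e = y.start ∨ e = y.finish) : x = y := by
  obtain ⟨⟨a, b⟩, ha, hab, hb⟩ := x
  obtain ⟨⟨a', b'⟩, ha', hab', hb'⟩ := y
  simp only [start, finish] at hx hy
  rcases hx with rfl | rfl <;> simp only [toLex_inj, Prod.mk.injEq] at hy <;>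
    refine Subtype.ext (Prod.ext ?_ ?_) <;> dsimp only <;> grind

lemma weaklyInterleaved_ends_iff {x y : AnglePair} (hxy : x ≠ y) :
    WeaklyInterleaved x.start x.finish y.start y.finish ↔
      WeaklyInterleaved x.1.1 x.1.2 y.1.1 y.1.2 := by
  obtain ⟨⟨a, b⟩, ha, hab, hb⟩ := x
  obtain ⟨⟨a', b'⟩, ha', hab', hb'⟩ := y
  have : ¬ (a = a' ∧ b = b') := fun ⟨h₁, h₂⟩ => hxy (by subst h₁ h₂; rfl)
  simp only [WeaklyInterleaved, start, finish, Prod.Lex.toLex_le_toLex]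
  grind

variable {θ : ℚ ×ₗ ℚ → ℝ}

def perturbedChord (hθ : StrictMono θ) (hθ01 : ∀ e, θ e ∈ Ico 0 1) (x : AnglePair) : Chord :=
  ⟨s(circlePoint (θ x.start), circlePoint (θ x.finish)), by simp [S1, norm_circlePoint],
    fun h => (hθ x.start_lt_finish).ne
      (circlePoint_injOn (hθ01 _) (hθ01 _) (Sym2.mk_isDiag_iff.1 h))⟩

variable (hθ : StrictMono θ) (hθ01 : ∀ e, θ e ∈ Ico 0 1)

lemma eq_of_mem_perturbedChord {x y : AnglePair} {z : ℂ}
    (hx : z ∈ (perturbedChord hθ hθ01 x).1) (hy : z ∈ (perturbedChord hθ hθ01 y).1) : x = y := by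
  have hinj {e e'} (h : circlePoint (θ e) = circlePoint (θ e')) : e = e' :=
    hθ.injective (circlePoint_injOn (hθ01 e) (hθ01 e') h)
  simp only [perturbedChord, Sym2.mem_iff] at hx hy
  rcases hx with rfl | rfl
  · exact eq_of_mem_ends (Or.inl rfl) (hy.imp hinj hinj)
  · exact eq_of_mem_ends (Or.inr rfl) (hy.imp hinj hinj)

lemma perturbedChord_injective : Function.Injective (perturbedChord hθ hθ01) :=
  fun x _ h => eq_of_mem_perturbedChord hθ hθ01 (Sym2.mem_mk_left _ (circlePoint (θ x.finish)))
    (h ▸ Sym2.mem_mk_left _ _)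

lemma circleGraph_adj_perturbedChord {x y : AnglePair} :
    CircleGraph.Adj (perturbedChord hθ hθ01 x) (perturbedChord hθ hθ01 y) ↔
      x ≠ y ∧ WeaklyInterleaved x.1.1 x.1.2 y.1.1 y.1.2 := by
  change _ ≠ _ ∧ _ ↔ _
  rw [(perturbedChord_injective hθ hθ01).ne_iff]
  refine and_congr_right fun hxy => ?_
  rw [← weaklyInterleaved_ends_iff hxy, ← hθ.weaklyInterleaved_iff]
  exact segment_circlePoint_inter_nonempty_iff (hθ01 _) (hθ01 _) (hθ01 _) (hθ01 _)
    (hθ x.start_lt_finish) (hθ y.start_lt_finish)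

def perturbedEmbedding : RationalCircleGraph ↪g CircleGraph where
  toFun C := perturbedChord hθ hθ01 (chordQEquiv.symm C)
  inj' := (perturbedChord_injective hθ hθ01).comp chordQEquiv.symm.injective
  map_rel_iff' {C D} := by
    obtain ⟨x, rfl⟩ := chordQEquiv.surjective C
    obtain ⟨y, rfl⟩ := chordQEquiv.surjective D
    simp only [Function.Embedding.coeFn_mk, Equiv.symm_apply_apply, circleGraph_adj_perturbedChord]
    exact rationalCircleGraph_adj_toChordQ.symm

end AnglePair

instance : Countable (ℚ ×ₗ ℚ) := inferInstanceAs (Countable (ℚ × ℚ))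

instance : Countable ChordQ := AnglePair.chordQEquiv.symm.injective.countable

/-- There is a countable family of chords of the circle, no two of
which share an endpoint, whose intersection graph is isomorphic to the rational circle
graph. -/
theorem exists_disjoint_endpoints_realisation :
    ∃ F : Set Chord, F.Countable ∧
      (∀ C ∈ F, ∀ D ∈ F, C ≠ D → ∀ z : ℂ, ¬ (z ∈ C.1 ∧ z ∈ D.1)) ∧
      Nonempty ((CircleGraph.induce F) ≃g RationalCircleGraph) := by
  obtain ⟨θ, hθ, hθ01⟩ := exists_strictMono_mem_Ico (ℚ ×ₗ ℚ)
  let f := AnglePair.perturbedEmbedding hθ hθ01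
  refine ⟨range f, countable_range f, ?_, ⟨f.isoInduceRange.symm⟩⟩
  rintro _ ⟨C, rfl⟩ _ ⟨D, rfl⟩ hCD z ⟨hzC, hzD⟩
  exact hCD (congrArg f (AnglePair.chordQEquiv.symm.injective
    (AnglePair.eq_of_mem_perturbedChord hθ hθ01 hzC hzD)))
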